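/- Let A ∈ ℤ_max^{n×n}, C ∈ ℤ_max^{q×n}, and V = ker E where E ∈ ℤ_max^{p×n} has finite volume. Then the set of cofinitely generated (C,A)-conditioned invariant congruences containing V admits a minimal element V_fg(C,A). Moreover, defining K := V^⊤, φ(X) := K ∩ (Aᵗ)^{-1}(X ⊕ Im Cᵗ), X_1 := K, X_{k+1} := φ(X_k), there is an index r ≤ vol(E)+1 such that X_{r+1} = X_r and V_fg(C,A) = (X_r)^⊥. -/

import Mathlib

/-!
Max-plus (tropical) framework.

The max-plus semiring `ℝ_max = ℝ ∪ {-∞}` is modelled as `WithBot ℝ`: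
max-plus addition `a ⊕ b = max a b` is the lattice `⊔`, and max-plus
multiplication `a ⊙ b = a + b` is `+` (with `⊥ = -∞` absorbing).
The topology induced by the metric `d(a,b) = |exp a - exp b|` is the
order topology.
-/

/-- The max-plus semiring `ℝ ∪ {-∞}`. -/
abbrev Rmax : Type := WithBot ℝ

/-- The topology of `ℝ_max` (the order topology, which coincides with the
topology induced by the metric `d(a,b) = |exp a - exp b|`). -/
instance : TopologicalSpace Rmax := Preorder.topology Rmax

instance : OrderTopology Rmax := ⟨rfl⟩

/-- Vectors with entries in a (max-plus-like) semiring `R`. -/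
abbrev Vec (R : Type*) (n : ℕ) := Fin n → R

section Defs

variable {R : Type*} [LinearOrder R] [Add R] [OrderBot R]

/-- Max-plus scalar action on a vector: `(λ x)_i = λ ⊙ x_i = λ + x_i`. -/
def sm {n : ℕ} (lam : R) (x : Vec R n) : Vec R n := fun i => lam + x i

/-- Max-plus matrix-vector product: `(A x)_i = ⊕_k A_{ik} ⊙ x_k = max_k (A_{ik} + x_k)`. -/
def mulVecMP {m n : ℕ} (A : Matrix (Fin m) (Fin n) R) (x : Vec R n) : Vec R m :=
  fun i => Finset.univ.sup fun k => A i k + x k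

/-- A subsemimodule (max-plus cone) of `R^n`: a subset stable under
max-plus linear combinations `λ x ⊕ μ y`. -/
def IsSemimodule {n : ℕ} (K : Set (Vec R n)) : Prop :=
  ∀ x ∈ K, ∀ y ∈ K, ∀ lam mu : R, (sm lam x ⊔ sm mu y) ∈ K

/-- Max-plus scalar action on a pair of vectors. -/
def smP {n : ℕ} (lam : R) (p : Vec R n × Vec R n) : Vec R n × Vec R n :=
  (sm lam p.1, sm lam p.2)

/-- A subsemimodule of `(R^n)²`. -/
def IsPairSemimodule {n : ℕ} (W : Set (Vec R n × Vec R n)) : Prop :=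
  ∀ p ∈ W, ∀ q ∈ W, ∀ lam mu : R, (smP lam p ⊔ smP mu q) ∈ W

/-- A congruence on `R^n`: an equivalence relation which is a
subsemimodule of `(R^n)²`. -/
def IsCongruence {n : ℕ} (W : Set (Vec R n × Vec R n)) : Prop :=
  Equivalence (fun x y => (x, y) ∈ W) ∧ IsPairSemimodule W

/-- The (max-plus) kernel of a matrix: `ker E = {(x,y) : E x = E y}`. -/
def kerM {p n : ℕ} (E : Matrix (Fin p) (Fin n) R) : Set (Vec R n × Vec R n) :=
  {w | mulVecMP E w.1 = mulVecMP E w.2}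

/-- The image of a matrix: `Im E = {E x}`. -/
def imM {n q : ℕ} (E : Matrix (Fin n) (Fin q) R) : Set (Vec R n) :=
  {y | ∃ x : Vec R q, y = mulVecMP E x}

/-- `A W = {(A x, A y) : (x,y) ∈ W}` for a set of pairs `W`. -/
def mapCong {n : ℕ} (A : Matrix (Fin n) (Fin n) R) (W : Set (Vec R n × Vec R n)) :
    Set (Vec R n × Vec R n) :=
  {p | ∃ w ∈ W, p = (mulVecMP A w.1, mulVecMP A w.2)}

/-- `A S = {A x : x ∈ S}`. -/
def mapSet {n : ℕ} (A : Matrix (Fin n) (Fin n) R) (S : Set (Vec R n)) : Set (Vec R n) :=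
  {y | ∃ x ∈ S, y = mulVecMP A x}

/-- `A⁻¹ S = {x : A x ∈ S}`. -/
def invSet {n : ℕ} (A : Matrix (Fin n) (Fin n) R) (S : Set (Vec R n)) : Set (Vec R n) :=
  {x | mulVecMP A x ∈ S}

/-- `A⁻¹ U = {(x,y) : (A x, A y) ∈ U}` for a set of pairs `U`. -/
def invPair {n : ℕ} (A : Matrix (Fin n) (Fin n) R) (U : Set (Vec R n × Vec R n)) :
    Set (Vec R n × Vec R n) :=
  {p | (mulVecMP A p.1, mulVecMP A p.2) ∈ U}

/-- The max-plus sum of two subsets of `R^n`: `X ⊕ Y = {x ⊕ y : x ∈ X, y ∈ Y}`. -/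
def setSum {n : ℕ} (X Y : Set (Vec R n)) : Set (Vec R n) :=
  {z | ∃ x ∈ X, ∃ y ∈ Y, z = x ⊔ y}

/-- The max-plus sum of two subsets of `(R^n)²`. -/
def pairSum {n : ℕ} (X Y : Set (Vec R n × Vec R n)) : Set (Vec R n × Vec R n) :=
  {z | ∃ x ∈ X, ∃ y ∈ Y, z = x ⊔ y}

/-- `W` is `(C,A)`-conditioned invariant: `A (W ∩ ker C) ⊆ W`. -/
def CondInv {n q : ℕ} (C : Matrix (Fin q) (Fin n) R) (A : Matrix (Fin n) (Fin n) R)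
    (W : Set (Vec R n × Vec R n)) : Prop :=
  mapCong A (W ∩ kerM C) ⊆ W

/-- `X` is `(A,B)`-controlled invariant: `A X ⊆ X ⊕ Im B`. -/
def ContrInv {n q : ℕ} (A : Matrix (Fin n) (Fin n) R) (B : Matrix (Fin n) (Fin q) R)
    (X : Set (Vec R n)) : Prop :=
  mapSet A X ⊆ setSum X (imM B)

/-- The max-plus scalar product `uᵗ v = ⊕_i u_i ⊙ v_i = max_i (u_i + v_i)`. -/
def dotMP {n : ℕ} (u v : Vec R n) : R := Finset.univ.sup fun i => u i + v i

/-- The orthogonal of a semimodule `X ⊆ R^n`: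
`X^⊥ = {(x,y) : xᵗ z = yᵗ z, ∀ z ∈ X}`. -/
def orthS {n : ℕ} (X : Set (Vec R n)) : Set (Vec R n × Vec R n) :=
  {p | ∀ z ∈ X, dotMP p.1 z = dotMP p.2 z}

/-- The orthogonal of a congruence (or set of pairs) `W ⊆ (R^n)²`:
`W^⊤ = {z : xᵗ z = yᵗ z, ∀ (x,y) ∈ W}`. -/
def orthC {n : ℕ} (W : Set (Vec R n × Vec R n)) : Set (Vec R n) :=
  {z | ∀ p ∈ W, dotMP p.1 z = dotMP p.2 z}

/-- The smallest congruence containing a set `S ⊆ (R^n)²`. -/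
def spanCong {n : ℕ} (S : Set (Vec R n × Vec R n)) : Set (Vec R n × Vec R n) :=
  ⋂₀ {W | IsCongruence W ∧ S ⊆ W}

/-- The smallest semimodule containing a set `S ⊆ R^n`. -/
def spanSet {n : ℕ} (S : Set (Vec R n)) : Set (Vec R n) :=
  ⋂₀ {K | IsSemimodule K ∧ S ⊆ K}

end Defs

/-- The integer max-plus semiring `ℤ_max = ℤ ∪ {-∞}`. -/
abbrev Zmax : Type := WithBot ℤ

/-!
Over `ℤ_max` orthogonality is an exact duality, `(ker M)^⊤ = Im Mᵀ`: a functional `x ↦ xᵗz`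
that factors through `M` is `x ↦ (Mx)ᵗu` with `u` given by coordinatewise infima, which exist
in `ℤ_max`. Through it, `ker D` is `(C,A)`-conditioned invariant and contains `ker E` exactly when
`Im Dᵀ` is `(Aᵀ,Cᵀ)`-controlled invariant and lies in `K = Im Eᵀ`; every such `Im Dᵀ` lies in every
`X_k`, and a fixed point `X_r` of the sequence is itself controlled invariant, so `X_r^⊥` is the
minimal congruence.

The `X_k` are decreasing semimodules inside `K` and the volume drops at every strict step, so the
sequence is stationary after at most `vol(K) ≤ vol(E)` steps; finite volume also makes `X_r`
finitely generated, i.e. `X_r^⊥` cofinitely generated. The bound `vol(Eᵀ) ≤ vol(E)` comes from the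
injection `t ↦ E(-t)` on normalized elements, with left inverse `s ↦ Eᵀ(-s)`: finite volume forces
all nonzero columns of `E` to have the same support, which makes the convention `-⊥ = ⊥` harmless.
-/

open Finset Matrix

lemma finset_sup_eq_of_eq_bot {ι β : Type*} [Fintype ι] [SemilatticeSup β] [OrderBot β]
    {f : ι → β} (k : ι) (h : ∀ i ≠ k, f i = ⊥) : univ.sup f = f k :=
  le_antisymm (Finset.sup_le fun i _ => by
    rcases eq_or_ne i k with rfl | hi
    · exact le_rfl
    · simp [h i hi]) (le_sup (mem_univ k))

lemma exists_finset_sup_eq {ι β : Type*} [Fintype ι] [LinearOrder β] [OrderBot β] {f : ι → β}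
    (h : univ.sup f ≠ ⊥) : ∃ i, univ.sup f = f i := by
  obtain ⟨i, -, hi⟩ :=
    exists_mem_eq_sup univ (nonempty_of_ne_empty fun he => h (by rw [he, sup_empty])) f
  exact ⟨i, hi⟩

section General

variable {R : Type*} [LinearOrder R] [Add R] {n q : ℕ}

lemma IsSemimodule.sm_mem {K : Set (Vec R n)} (hK : IsSemimodule K) {x : Vec R n} (hx : x ∈ K)
    (c : R) : sm c x ∈ K := by
  simpa using hK x hx x hx c c

lemma IsSemimodule.inter {X Y : Set (Vec R n)} (hX : IsSemimodule X) (hY : IsSemimodule Y) :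
    IsSemimodule (X ∩ Y) :=
  fun x hx y hy a b => ⟨hX x hx.1 y hy.1 a b, hY x hx.2 y hy.2 a b⟩

variable [OrderBot R]

lemma orthC_anti {W W' : Set (Vec R n × Vec R n)} (h : W ⊆ W') : orthC W' ⊆ orthC W :=
  fun _ hz p hp => hz p (h hp)

lemma orthS_anti {X X' : Set (Vec R n)} (h : X ⊆ X') : orthS X' ⊆ orthS X :=
  fun _ hp z hz => hp z (h hz)

lemma subset_orthS_orthC (W : Set (Vec R n × Vec R n)) : W ⊆ orthS (orthC W) :=
  fun p hp _ hz => hz p hp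

def contrInvSeq (K : Set (Vec R n)) (A : Matrix (Fin n) (Fin n) R)
    (B : Matrix (Fin n) (Fin q) R) : ℕ → Set (Vec R n)
  | 0 => K
  | k + 1 => K ∩ invSet A (setSum (contrInvSeq K A B k) (imM B))

variable {K : Set (Vec R n)} {A : Matrix (Fin n) (Fin n) R} {B : Matrix (Fin n) (Fin q) R}

lemma eq_contrInvSeq {X : ℕ → Set (Vec R n)} (h0 : X 0 = K)
    (hstep : ∀ k, X (k + 1) = K ∩ invSet A (setSum (X k) (imM B))) : X = contrInvSeq K A B := by
  funext k
  induction k with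
  | zero => exact h0
  | succ k ih => rw [hstep, ih, contrInvSeq]

lemma contrInvSeq_subset (k : ℕ) : contrInvSeq K A B k ⊆ K := by
  cases k
  · exact subset_rfl
  · exact Set.inter_subset_left

lemma contrInvSeq_succ_subset (k : ℕ) : contrInvSeq K A B (k + 1) ⊆ contrInvSeq K A B k := by
  induction k with
  | zero => exact contrInvSeq_subset 1
  | succ k ih =>
    rintro x ⟨hxK, y, hy, b, hb, hAx⟩
    exact ⟨hxK, y, ih hy, b, hb, hAx⟩

lemma ContrInv.subset_contrInvSeq {Y : Set (Vec R n)} (hY : ContrInv A B Y) (hYK : Y ⊆ K)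
    (k : ℕ) : Y ⊆ contrInvSeq K A B k := by
  induction k with
  | zero => exact hYK
  | succ k ih =>
    intro y hy
    obtain ⟨x, hx, b, hb, hAy⟩ := hY ⟨y, hy, rfl⟩
    exact ⟨hYK hy, x, ih hx, b, hb, hAy⟩

lemma contrInv_contrInvSeq_of_succ_eq {r : ℕ}
    (hr : contrInvSeq K A B (r + 1) = contrInvSeq K A B r) :
    ContrInv A B (contrInvSeq K A B r) := by
  rintro _ ⟨x, hx, rfl⟩
  rw [← hr] at hx
  exact hx.2

end General

lemma exists_succ_eq_of_lt {β : Type*} (X : ℕ → β) (μ : ℕ → ℕ)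
    (h : ∀ k, X (k + 1) ≠ X k → μ (k + 1) < μ k) : ∃ r ≤ μ 0, X (r + 1) = X r := by
  by_contra! hne
  have hdesc : ∀ k ≤ μ 0 + 1, μ k + k ≤ μ 0 := by
    intro k hk
    induction k with
    | zero => simp
    | succ k ih => linarith [ih (by omega), h k (hne k (by omega))]
  linarith [hdesc (μ 0 + 1) le_rfl]

section MaxPlusAlgebra

variable {α : Type*} [AddCommMonoid α] {m n q : ℕ}

lemma sm_sm (a b : WithBot α) (x : Vec (WithBot α) n) : sm a (sm b x) = sm (a + b) x :=
  funext fun i => (add_assoc a b (x i)).symm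

lemma sm_zero (x : Vec (WithBot α) n) : sm 0 x = x :=
  funext fun i => zero_add (x i)

variable [LinearOrder α]

lemma IsSemimodule.sup_mem {K : Set (Vec (WithBot α) n)} (hK : IsSemimodule K)
    {x y : Vec (WithBot α) n} (hx : x ∈ K) (hy : y ∈ K) : x ⊔ y ∈ K := by
  simpa only [sm_zero] using hK x hx y hy 0 0

lemma mulVecMP_bot (G : Matrix (Fin m) (Fin n) (WithBot α)) :
    mulVecMP G (⊥ : Vec (WithBot α) n) = ⊥ := by
  funext i
  simp [mulVecMP]

lemma bot_mem_imM (G : Matrix (Fin n) (Fin m) (WithBot α)) : ⊥ ∈ imM G :=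
  ⟨⊥, (mulVecMP_bot G).symm⟩

lemma bot_mem_contrInvSeq {K : Set (Vec (WithBot α) n)} {A : Matrix (Fin n) (Fin n) (WithBot α)}
    {B : Matrix (Fin n) (Fin q) (WithBot α)} (hK : ⊥ ∈ K) (k : ℕ) : ⊥ ∈ contrInvSeq K A B k := by
  induction k with
  | zero => exact hK
  | succ k ih => exact ⟨hK, ⊥, ih, ⊥, bot_mem_imM B, by rw [mulVecMP_bot, sup_idem]⟩

lemma dotMP_comm (x y : Vec (WithBot α) n) : dotMP x y = dotMP y x := by
  simp only [dotMP, add_comm]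

lemma dotMP_bot_left (z : Vec (WithBot α) n) : dotMP ⊥ z = ⊥ := by
  simp [dotMP]

def unitVec (k : Fin n) : Vec (WithBot α) n := fun i => if i = k then 0 else ⊥

lemma dotMP_unitVec (x : Vec (WithBot α) n) (k : Fin n) : dotMP x (unitVec k) = x k := by
  rw [dotMP, finset_sup_eq_of_eq_bot k fun i hi => by simp [unitVec, hi]]
  simp [unitVec]

lemma mulVecMP_unitVec (G : Matrix (Fin m) (Fin n) (WithBot α)) (k : Fin n) :
    mulVecMP G (unitVec k) = fun i => G i k := by
  funext i
  rw [mulVecMP, finset_sup_eq_of_eq_bot k fun i hi => by simp [unitVec, hi]]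
  simp [unitVec]

lemma mulVecMP_eq_finset_sup (G : Matrix (Fin n) (Fin m) (WithBot α)) (w : Vec (WithBot α) m) :
    mulVecMP G w = univ.sup fun k => sm (w k) fun i => G i k := by
  funext i
  simp only [mulVecMP, Finset.sup_apply, sm, add_comm]

lemma imM_subset {K : Set (Vec (WithBot α) n)} (hK : IsSemimodule K) (hbot : ⊥ ∈ K)
    {G : Matrix (Fin n) (Fin m) (WithBot α)} (hG : ∀ k, (fun i => G i k) ∈ K) : imM G ⊆ K := by
  rintro _ ⟨w, rfl⟩
  rw [mulVecMP_eq_finset_sup]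
  exact Finset.sup_induction hbot (fun _ hx _ hy => hK.sup_mem hx hy) fun k _ => hK.sm_mem (hG k) _

lemma column_mem_imM (G : Matrix (Fin m) (Fin n) (WithBot α))
    (k : Fin n) : (fun i => G i k) ∈ imM G :=
  ⟨unitVec k, (mulVecMP_unitVec G k).symm⟩

variable [IsOrderedAddMonoid α]

lemma add_finset_sup {ι : Type*} (s : Finset ι) (f : ι → WithBot α) (c : WithBot α) :
    c + s.sup f = s.sup fun i => c + f i :=
  apply_sup_eq_sup_comp (c + ·) (fun x y => add_max c x y) (WithBot.add_bot c)

lemma finset_sup_add {ι : Type*} (s : Finset ι) (f : ι → WithBot α) (c : WithBot α) :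
    s.sup f + c = s.sup fun i => f i + c := by
  simp only [add_comm _ c, add_finset_sup]

lemma sm_sup (c : WithBot α) (x y : Vec (WithBot α) n) : sm c (x ⊔ y) = sm c x ⊔ sm c y :=
  funext fun i => add_max c (x i) (y i)

lemma sup_sm (c : WithBot α) (x : Vec (WithBot α) n) :
    univ.sup (sm c x) = c + univ.sup x :=
  (add_finset_sup _ _ _).symm

lemma mulVecMP_sup (G : Matrix (Fin m) (Fin n) (WithBot α)) (x y : Vec (WithBot α) n) :
    mulVecMP G (x ⊔ y) = mulVecMP G x ⊔ mulVecMP G y := by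
  funext i
  simp only [mulVecMP, Pi.sup_apply, ← sup_sup, add_max]
  rfl

lemma mulVecMP_sm (G : Matrix (Fin m) (Fin n) (WithBot α)) (c : WithBot α)
    (x : Vec (WithBot α) n) : mulVecMP G (sm c x) = sm c (mulVecMP G x) := by
  funext i
  simp only [mulVecMP, sm, add_finset_sup, add_left_comm]

lemma mulVecMP_mono (G : Matrix (Fin m) (Fin n) (WithBot α)) {x y : Vec (WithBot α) n}
    (h : x ≤ y) : mulVecMP G x ≤ mulVecMP G y :=
  fun _ => sup_mono_fun fun k _ => add_le_add_right (h k) _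

lemma dotMP_sup_left (x y z : Vec (WithBot α) n) :
    dotMP (x ⊔ y) z = dotMP x z ⊔ dotMP y z := by
  simp only [dotMP, ← sup_sup]
  exact sup_congr rfl fun i _ => max_add _ _ _

lemma dotMP_sup_right (x y z : Vec (WithBot α) n) :
    dotMP z (x ⊔ y) = dotMP z x ⊔ dotMP z y := by
  rw [dotMP_comm, dotMP_sup_left, dotMP_comm x, dotMP_comm y]

lemma dotMP_finset_sup_left {ι : Type*} (s : Finset ι) (y : ι → Vec (WithBot α) n)
    (z : Vec (WithBot α) n) : dotMP (s.sup y) z = s.sup fun i => dotMP (y i) z := by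
  classical
  induction s using Finset.induction_on with
  | empty => simp [dotMP]
  | insert i s _ ih => rw [sup_insert, sup_insert, dotMP_sup_left, ih]

lemma dotMP_sm_left (c : WithBot α) (x z : Vec (WithBot α) n) :
    dotMP (sm c x) z = c + dotMP x z := by
  simp only [dotMP, sm, add_finset_sup, add_assoc]

lemma dotMP_sm_right (c : WithBot α) (x z : Vec (WithBot α) n) :
    dotMP x (sm c z) = c + dotMP x z := by
  rw [dotMP_comm, dotMP_sm_left, dotMP_comm]

lemma dotMP_mulVecMP (G : Matrix (Fin m) (Fin n) (WithBot α)) (x : Vec (WithBot α) m)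
    (w : Vec (WithBot α) n) : dotMP x (mulVecMP G w) = dotMP (mulVecMP Gᵀ x) w := by
  simp only [dotMP, mulVecMP, add_finset_sup, finset_sup_add, transpose_apply]
  rw [Finset.sup_comm]
  simp only [add_comm, add_left_comm]

lemma mulVecMP_dotMP (G : Matrix (Fin m) (Fin n) (WithBot α)) (x : Vec (WithBot α) m)
    (w : Vec (WithBot α) n) : dotMP (mulVecMP G w) x = dotMP w (mulVecMP Gᵀ x) := by
  rw [dotMP_comm, dotMP_mulVecMP, dotMP_comm]

end MaxPlusAlgebra

section Semimodules

variable {α : Type*} [AddCommMonoid α] [LinearOrder α] [IsOrderedAddMonoid α] {m n q : ℕ}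

lemma isSemimodule_imM (G : Matrix (Fin n) (Fin m) (WithBot α)) : IsSemimodule (imM G) := by
  rintro _ ⟨u, rfl⟩ _ ⟨v, rfl⟩ a b
  exact ⟨sm a u ⊔ sm b v, by rw [mulVecMP_sup, mulVecMP_sm, mulVecMP_sm]⟩

lemma isSemimodule_orthC (W : Set (Vec (WithBot α) n × Vec (WithBot α) n)) :
    IsSemimodule (orthC W) := by
  intro x hx y hy a b p hp
  simp only [dotMP_sup_right, dotMP_sm_right, hx p hp, hy p hp]

lemma IsSemimodule.setSum {X Y : Set (Vec (WithBot α) n)} (hX : IsSemimodule X)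
    (hY : IsSemimodule Y) : IsSemimodule (setSum X Y) := by
  rintro _ ⟨x, hx, y, hy, rfl⟩ _ ⟨x', hx', y', hy', rfl⟩ a b
  refine ⟨sm a x ⊔ sm b x', hX x hx x' hx' a b, sm a y ⊔ sm b y', hY y hy y' hy' a b, ?_⟩
  rw [sm_sup, sm_sup, sup_sup_sup_comm]

lemma IsSemimodule.invSet {S : Set (Vec (WithBot α) n)} (hS : IsSemimodule S)
    (A : Matrix (Fin n) (Fin n) (WithBot α)) : IsSemimodule (invSet A S) := by
  intro x hx y hy a b
  show mulVecMP A (sm a x ⊔ sm b y) ∈ S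
  rw [mulVecMP_sup, mulVecMP_sm, mulVecMP_sm]
  exact hS _ hx _ hy a b

variable {K : Set (Vec (WithBot α) n)} {A : Matrix (Fin n) (Fin n) (WithBot α)}
  {B : Matrix (Fin n) (Fin q) (WithBot α)}

lemma IsSemimodule.contrInvSeq (hK : IsSemimodule K) (k : ℕ) :
    IsSemimodule (contrInvSeq K A B k) := by
  induction k with
  | zero => exact hK
  | succ k ih => exact hK.inter ((ih.setSum (isSemimodule_imM B)).invSet A)

end Semimodules

section Duality

variable {α : Type*} [AddCommMonoid α] [LinearOrder α] [IsOrderedAddMonoid α] {m n q : ℕ}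

lemma imM_transpose_subset_orthC_kerM (M : Matrix (Fin m) (Fin n) (WithBot α)) :
    imM Mᵀ ⊆ orthC (kerM M) := by
  rintro _ ⟨u, rfl⟩ p hp
  rw [dotMP_mulVecMP, dotMP_mulVecMP, transpose_transpose, hp]

lemma orthS_imM (G : Matrix (Fin n) (Fin m) (WithBot α)) : orthS (imM G) = kerM Gᵀ := by
  ext p
  constructor
  · intro h
    funext k
    simpa only [dotMP_mulVecMP, dotMP_unitVec] using h _ ⟨unitVec k, rfl⟩
  · rintro h _ ⟨w, rfl⟩
    rw [dotMP_mulVecMP, dotMP_mulVecMP]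
    exact congrArg (dotMP · w) h

lemma ContrInv.condInv_orthS {A : Matrix (Fin n) (Fin n) (WithBot α)}
    {C : Matrix (Fin q) (Fin n) (WithBot α)} {X : Set (Vec (WithBot α) n)}
    (hX : ContrInv Aᵀ Cᵀ X) : CondInv C A (orthS X) := by
  rintro _ ⟨p, ⟨hpX, hpC⟩, rfl⟩ z hz
  obtain ⟨w, hw, _, ⟨v, rfl⟩, hAz⟩ := hX ⟨z, hz, rfl⟩
  rw [mulVecMP_dotMP, mulVecMP_dotMP, hAz, dotMP_sup_right, dotMP_sup_right, dotMP_mulVecMP,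
    dotMP_mulVecMP, transpose_transpose, hpX w hw, show mulVecMP C p.1 = mulVecMP C p.2 from hpC]

lemma dotMP_le_sup_of_mem_orthC_kerM {M : Matrix (Fin m) (Fin n) (WithBot α)}
    {z : Vec (WithBot α) n} (hz : z ∈ orthC (kerM M)) {x : Vec (WithBot α) n}
    (y : Fin m → Vec (WithBot α) n) (hy : ∀ j, mulVecMP M x j ≤ mulVecMP M (y j) j) :
    dotMP x z ≤ univ.sup fun j => dotMP (y j) z := by
  set w := univ.sup y
  have hxw : mulVecMP M x ≤ mulVecMP M w := fun j =>
    (hy j).trans (mulVecMP_mono M (le_sup (f := y) (mem_univ j)) j)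
  have hker : (x ⊔ w, w) ∈ kerM M := by
    show mulVecMP M (x ⊔ w) = mulVecMP M w
    rw [mulVecMP_sup, sup_eq_right.mpr hxw]
  calc dotMP x z ≤ dotMP (x ⊔ w) z := by rw [dotMP_sup_left]; exact le_sup_left
    _ = dotMP w z := hz _ hker
    _ = _ := dotMP_finset_sup_left _ _ _

end Duality

lemma finset_sup_fin_add {β : Type*} [SemilatticeSup β] [OrderBot β] {a b : ℕ}
    (f : Fin (a + b) → β) :
    univ.sup f = (univ.sup fun i => f (Fin.castAdd b i)) ⊔ univ.sup fun i => f (Fin.natAdd a i) :=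
  eq_of_forall_ge_iff fun c => by simp [Finset.sup_le_iff, Fin.forall_fin_add]

section Stacking

variable {R : Type*} {m₁ m₂ n : ℕ} (D : Matrix (Fin m₁) (Fin n) R) (C : Matrix (Fin m₂) (Fin n) R)

def stackRows : Matrix (Fin (m₁ + m₂)) (Fin n) R :=
  Matrix.of (Fin.append (Matrix.of.symm D) (Matrix.of.symm C))

variable [LinearOrder R] [Add R] [OrderBot R]

lemma kerM_stackRows : kerM (stackRows D C) = kerM D ∩ kerM C := by
  ext p
  simp [stackRows, kerM, mulVecMP, funext_iff, Fin.forall_fin_add]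

lemma mulVecMP_transpose_stackRows (w : Vec R (m₁ + m₂)) :
    mulVecMP (stackRows D C)ᵀ w =
      mulVecMP Dᵀ (fun i => w (Fin.castAdd m₂ i)) ⊔ mulVecMP Cᵀ (fun i => w (Fin.natAdd m₁ i)) := by
  funext j
  simp [stackRows, mulVecMP, finset_sup_fin_add]

lemma imM_transpose_stackRows : imM (stackRows D C)ᵀ = setSum (imM Dᵀ) (imM Cᵀ) := by
  ext z
  constructor
  · rintro ⟨w, rfl⟩
    exact ⟨_, ⟨_, rfl⟩, _, ⟨_, rfl⟩, mulVecMP_transpose_stackRows D C w⟩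
  · rintro ⟨_, ⟨u, rfl⟩, _, ⟨v, rfl⟩, rfl⟩
    refine ⟨Fin.append u v, ?_⟩
    simp only [mulVecMP_transpose_stackRows, Fin.append_left, Fin.append_right]

end Stacking

section Integer

variable {m n : ℕ}

lemma coe_add_neg_coe_add (a : ℤ) (d : Zmax) : (a : Zmax) + ((-a : ℤ) + d) = d := by
  rw [← add_assoc, ← WithBot.coe_add, add_neg_cancel, WithBot.coe_zero, zero_add]

/-- Take for `u_j` the infimum of `xᵗz` over the slice `(Mx)_j = 0`; it exists because `ℤ_max`
is conditionally complete. -/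
lemma exists_dotMP_mulVecMP_eq {M : Matrix (Fin m) (Fin n) Zmax} {z : Vec Zmax n}
    (hz : z ∈ orthC (kerM M)) : ∃ u, ∀ x, dotMP (mulVecMP M x) u = dotMP x z := by
  set S : Fin m → Set Zmax := fun j => (dotMP · z) '' {x | mulVecMP M x j = 0}
  refine ⟨fun j => sInf (S j), fun x => ?_⟩
  have hslice : ∀ j (a : ℤ), mulVecMP M x j = a → ((-a : ℤ) : Zmax) + dotMP x z ∈ S j :=
    fun j a ha => ⟨sm ((-a : ℤ) : Zmax) x, by
      rw [Set.mem_ofPred_eq, mulVecMP_sm, sm, ha, ← WithBot.coe_add, neg_add_cancel]; rfl,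
      dotMP_sm_left _ _ _⟩
  apply le_antisymm
  · refine Finset.sup_le fun j _ => ?_
    cases hv : mulVecMP M x j using WithBot.recBotCoe with
    | bot => simp
    | coe a =>
      calc (a : Zmax) + sInf (S j) ≤ a + (((-a : ℤ) : Zmax) + dotMP x z) :=
            add_le_add_right (csInf_le (OrderBot.bddBelow _) (hslice j a hv)) _
        _ = dotMP x z := coe_add_neg_coe_add a _
  · by_contra! hlt
    have hD : ⊥ < dotMP x z := bot_le.trans_lt hlt
    have hy : ∀ j, ∃ y, mulVecMP M x j ≤ mulVecMP M y j ∧ dotMP y z < dotMP x z := by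
      intro j
      cases hv : mulVecMP M x j using WithBot.recBotCoe with
      | bot => exact ⟨⊥, bot_le, by rwa [dotMP_bot_left]⟩
      | coe a =>
        have hj : (a : Zmax) + sInf (S j) < a + (((-a : ℤ) : Zmax) + dotMP x z) := by
          rw [coe_add_neg_coe_add, ← hv]
          exact (le_sup (f := fun j => mulVecMP M x j + sInf (S j)) (mem_univ j)).trans_lt hlt
        obtain ⟨_, ⟨y, hy0, rfl⟩, hy⟩ := exists_lt_of_csInf_lt ⟨_, hslice j a hv⟩
          ((WithBot.add_lt_add_iff_left WithBot.coe_ne_bot).mp hj)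
        refine ⟨sm a y, ?_, ?_⟩
        · rw [mulVecMP_sm, sm, show mulVecMP M y j = 0 from hy0, add_zero]
        · rw [dotMP_sm_left, ← coe_add_neg_coe_add a (dotMP x z)]
          exact (WithBot.add_lt_add_iff_left WithBot.coe_ne_bot).mpr hy
    choose y hyM hyz using hy
    exact (dotMP_le_sup_of_mem_orthC_kerM hz y hyM).not_gt
      ((Finset.sup_lt_iff hD).mpr fun j _ => hyz j)

theorem orthC_kerM (M : Matrix (Fin m) (Fin n) Zmax) : orthC (kerM M) = imM Mᵀ := by
  refine Set.Subset.antisymm (fun z hz => ?_) (imM_transpose_subset_orthC_kerM M)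
  obtain ⟨u, hu⟩ := exists_dotMP_mulVecMP_eq hz
  refine ⟨u, funext fun k => ?_⟩
  rw [← dotMP_unitVec z k, dotMP_comm, ← hu, mulVecMP_dotMP, dotMP_comm, dotMP_unitVec]

lemma CondInv.contrInv_imM_transpose {q : ℕ} {A : Matrix (Fin n) (Fin n) Zmax}
    {C : Matrix (Fin q) (Fin n) Zmax} {D : Matrix (Fin m) (Fin n) Zmax}
    (hD : CondInv C A (kerM D)) : ContrInv Aᵀ Cᵀ (imM Dᵀ) := by
  rintro _ ⟨_, ⟨u, rfl⟩, rfl⟩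
  rw [← imM_transpose_stackRows, ← orthC_kerM, kerM_stackRows]
  intro p hp
  have hAp : mulVecMP D (mulVecMP A p.1) = mulVecMP D (mulVecMP A p.2) := hD ⟨p, hp, rfl⟩
  simp only [dotMP_mulVecMP, transpose_transpose, hAp]

end Integer

section Volume

variable {m n : ℕ}

/-- `vol K` is the cardinality of this set. -/
def normalizedPart (K : Set (Vec Zmax n)) : Set (Vec Zmax n) := {z ∈ K | univ.sup z = 0}

/-- Negation on `ℤ_max`, with the convention `-⊥ = ⊥` (there is no `+∞`). -/
def negBot (a : Zmax) : Zmax := WithBot.map Neg.neg a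

@[simp] lemma negBot_coe (a : ℤ) : negBot a = ((-a : ℤ) : Zmax) := rfl

@[simp] lemma negBot_bot : negBot ⊥ = ⊥ := rfl

def normalizeVec (z : Vec Zmax n) : Vec Zmax n := sm (negBot (univ.sup z)) z

lemma sm_sm_neg (a : ℤ) (x : Vec Zmax n) : sm (a : Zmax) (sm ((-a : ℤ) : Zmax) x) = x :=
  funext fun i => coe_add_neg_coe_add a (x i)

lemma exists_sup_eq_coe {z : Vec Zmax n} (hz : z ≠ ⊥) : ∃ s : ℤ, univ.sup z = s := by
  obtain ⟨s, hs⟩ := WithBot.ne_bot_iff_exists.mp fun h =>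
    hz (funext fun i => (Finset.sup_eq_bot_iff z univ).mp h i (mem_univ i))
  exact ⟨s, hs.symm⟩

lemma sm_sup_normalizeVec {z : Vec Zmax n} (hz : z ≠ ⊥) : sm (univ.sup z) (normalizeVec z) = z := by
  obtain ⟨s, hs⟩ := exists_sup_eq_coe hz
  rw [normalizeVec, hs, negBot_coe, sm_sm_neg]

lemma normalizeVec_mem_normalizedPart {K : Set (Vec Zmax n)} (hK : IsSemimodule K)
    {z : Vec Zmax n} (hz : z ∈ K) (hz0 : z ≠ ⊥) : normalizeVec z ∈ normalizedPart K := by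
  obtain ⟨s, hs⟩ := exists_sup_eq_coe hz0
  refine ⟨hK.sm_mem hz _, ?_⟩
  rw [normalizeVec, sup_sm, hs, negBot_coe, ← WithBot.coe_add, neg_add_cancel, WithBot.coe_zero]

lemma normalizeVec_eq_self {K : Set (Vec Zmax n)} {z : Vec Zmax n} (hz : z ∈ normalizedPart K) :
    normalizeVec z = z := by
  rw [normalizeVec, hz.2, ← WithBot.coe_zero, negBot_coe, neg_zero, WithBot.coe_zero, sm_zero]

lemma normalizeVec_sm (c : ℤ) (z : Vec Zmax n) :
    normalizeVec (sm (c : Zmax) z) = normalizeVec z := by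
  rw [normalizeVec, normalizeVec, sup_sm, sm_sm]
  cases univ.sup z using WithBot.recBotCoe with
  | bot => simp only [WithBot.add_bot, negBot_bot, WithBot.bot_add]
  | coe s =>
    rw [← WithBot.coe_add, negBot_coe, negBot_coe, ← WithBot.coe_add]
    congr 2
    ring

lemma exists_eq_sm_of_normalizeVec_eq {x y : Vec Zmax n} (hx : x ≠ ⊥) (hy : y ≠ ⊥)
    (h : normalizeVec x = normalizeVec y) : ∃ c : ℤ, x = sm (c : Zmax) y := by
  obtain ⟨a, ha⟩ := exists_sup_eq_coe hx
  obtain ⟨b, hb⟩ := exists_sup_eq_coe hy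
  refine ⟨a - b, ?_⟩
  rw [← sm_sup_normalizeVec hx, h, normalizeVec, ha, hb, negBot_coe, sm_sm, ← WithBot.coe_add,
    sub_eq_add_neg]

lemma ncard_normalizedPart_lt {Y Z : Set (Vec Zmax n)} (hY : IsSemimodule Y) (hZ : IsSemimodule Z)
    (hbot : ⊥ ∈ Y) (hYZ : Y ⊂ Z) (hfin : (normalizedPart Z).Finite) :
    (normalizedPart Y).ncard < (normalizedPart Z).ncard := by
  obtain ⟨z, hzZ, hzY⟩ := Set.exists_of_ssubset hYZ
  have hz0 : z ≠ ⊥ := fun h => hzY (h ▸ hbot)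
  refine Set.ncard_lt_ncard ⟨fun w hw => ⟨hYZ.subset hw.1, hw.2⟩, fun h => hzY ?_⟩ hfin
  rw [← sm_sup_normalizeVec hz0]
  exact hY.sm_mem (h (normalizeVec_mem_normalizedPart hZ hzZ hz0)).1 _

lemma exists_eq_imM_of_finite_normalizedPart {K : Set (Vec Zmax n)} (hK : IsSemimodule K)
    (hbot : ⊥ ∈ K) (hfin : (normalizedPart K).Finite) :
    ∃ (m : ℕ) (G : Matrix (Fin n) (Fin m) Zmax), K = imM G := by
  obtain ⟨m, v, -, hv⟩ := hfin.fin_param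
  have hvK : ∀ k, v k ∈ K := fun k => (hv ▸ Set.mem_range_self k : v k ∈ normalizedPart K).1
  refine ⟨m, Matrix.of fun i k => v k i, Set.Subset.antisymm (fun z hz => ?_) ?_⟩
  · rcases eq_or_ne z ⊥ with rfl | hz0
    · exact bot_mem_imM _
    obtain ⟨k, hk⟩ := hv ▸ normalizeVec_mem_normalizedPart hK hz hz0
    refine ⟨sm (univ.sup z) (unitVec k), ?_⟩
    rw [mulVecMP_sm, mulVecMP_unitVec]
    exact (sm_sup_normalizeVec hz0).symm.trans (by rw [← hk]; rfl)
  · exact imM_subset hK hbot fun k => hvK k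

end Volume

section FiniteVolume

variable {m n : ℕ}

/-- Otherwise the vectors `normalizeVec z ⊕ (-t) normalizeVec z'`, `t ∈ ℕ`, are infinitely many
distinct elements of `normalizedPart K`. -/
lemma IsSemimodule.apply_ne_bot_of_finite {K : Set (Vec Zmax n)} (hK : IsSemimodule K)
    (hfin : (normalizedPart K).Finite) {z z' : Vec Zmax n} (hz : z ∈ K) (hz' : z' ∈ K)
    (hz0 : z ≠ ⊥) {j : Fin n} (hz'j : z' j ≠ ⊥) : z j ≠ ⊥ := by
  intro hzj
  have hz'0 : z' ≠ ⊥ := fun h => hz'j (by rw [h]; rfl)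
  obtain ⟨e, he⟩ := WithBot.ne_bot_iff_exists.mp hz'j
  obtain ⟨s', hs'⟩ := exists_sup_eq_coe hz'0
  have hn := normalizeVec_mem_normalizedPart hK hz hz0
  have hn' := normalizeVec_mem_normalizedPart hK hz' hz'0
  let f : ℕ → Vec Zmax n := fun t => normalizeVec z ⊔ sm ((-t : ℤ) : Zmax) (normalizeVec z')
  refine Set.infinite_of_injective_forall_mem (f := f) (fun t t' htt' => ?_) (fun t => ?_) hfin
  · have h := congrFun htt' j
    simp only [f, Pi.sup_apply, sm, normalizeVec, hzj, hs', ← he, WithBot.add_bot, bot_sup_eq,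
      negBot_coe, ← WithBot.coe_add, WithBot.coe_inj] at h
    omega
  · refine ⟨hK.sup_mem hn.1 (hK.sm_mem hn'.1 _), ?_⟩
    rw [Finset.sup_sup, hn.2, sup_sm, hn'.2, add_zero]
    exact sup_eq_left.mpr (WithBot.coe_le_coe.mpr (by omega))

lemma apply_ne_bot_of_finite_normalizedPart_imM {M : Matrix (Fin m) (Fin n) Zmax}
    (hfin : (normalizedPart (imM M)).Finite) {j j' : Fin m} {k k' : Fin n}
    (h : M j k ≠ ⊥) (h' : M j' k' ≠ ⊥) : M j' k ≠ ⊥ :=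
  (isSemimodule_imM M).apply_ne_bot_of_finite hfin (column_mem_imM M k) (column_mem_imM M k')
    (fun hc => h (congrFun hc j)) h'

def negVec (x : Vec Zmax n) : Vec Zmax n := fun i => negBot (x i)

lemma negVec_bot : negVec (⊥ : Vec Zmax n) = ⊥ := rfl

lemma negVec_sm (c : ℤ) (x : Vec Zmax n) :
    negVec (sm (c : Zmax) x) = sm ((-c : ℤ) : Zmax) (negVec x) := by
  funext i
  simp only [negVec, sm]
  cases x i using WithBot.recBotCoe with
  | bot => rfl
  | coe a => rw [← WithBot.coe_add, negBot_coe, negBot_coe, ← WithBot.coe_add, neg_add]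

lemma le_mulVecMP_transpose_negVec_mulVecMP_negVec (M : Matrix (Fin m) (Fin n) Zmax)
    (u : Vec Zmax m) :
    mulVecMP Mᵀ u ≤ mulVecMP Mᵀ (negVec (mulVecMP M (negVec (mulVecMP Mᵀ u)))) := by
  set t := mulVecMP Mᵀ u
  intro k
  rcases eq_or_ne (t k) ⊥ with htk | htk
  · exact htk ▸ bot_le
  obtain ⟨j, hj⟩ := exists_finset_sup_eq (f := fun j => Mᵀ k j + u j) htk
  replace hj : t k = M j k + u j := hj
  obtain ⟨hM, hu⟩ := WithBot.add_ne_bot.mp (hj ▸ htk)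
  obtain ⟨μ, hμ⟩ := WithBot.ne_bot_iff_exists.mp hM
  obtain ⟨ν, hν⟩ := WithBot.ne_bot_iff_exists.mp hu
  have hsj : mulVecMP M (negVec t) j = ((-ν : ℤ) : Zmax) := by
    apply le_antisymm
    · refine Finset.sup_le fun k' _ => ?_
      rcases eq_or_ne (M j k') ⊥ with hMk' | hMk'
      · simp [hMk']
      obtain ⟨μ', hμ'⟩ := WithBot.ne_bot_iff_exists.mp hMk'
      have : ((μ' + ν : ℤ) : Zmax) ≤ t k' := by
        rw [WithBot.coe_add, hμ', hν]
        exact le_sup (f := fun j => Mᵀ k' j + u j) (mem_univ j)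
      obtain ⟨τ', hτ', hle⟩ := WithBot.coe_le_iff.mp this
      simp only [negVec, hτ', ← hμ', negBot_coe, ← WithBot.coe_add, WithBot.coe_le_coe]
      omega
    · calc ((-ν : ℤ) : Zmax) = M j k + negVec t k := by
            simp only [negVec, hj, ← hμ, ← hν, ← WithBot.coe_add, negBot_coe, WithBot.coe_inj]
            omega
        _ ≤ _ := le_sup (f := fun k => M j k + negVec t k) (mem_univ k)
  calc t k = Mᵀ k j + negVec (mulVecMP M (negVec t)) j := by
        rw [transpose_apply, negVec, hsj, hj, ← hν, negBot_coe, neg_neg]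
    _ ≤ _ := le_sup (f := fun j => Mᵀ k j + negVec (mulVecMP M (negVec t)) j) (mem_univ j)

/-- For `t = Mᵀu`, the row `j` meets the support of `t` in some column `k'`; as the columns of `M`
share their support, so does every column `k` with `M j k ≠ ⊥`. -/
lemma mulVecMP_transpose_apply_ne_bot {M : Matrix (Fin m) (Fin n) Zmax}
    (hfin : (normalizedPart (imM M)).Finite) (u : Vec Zmax m) {j : Fin m} {k : Fin n}
    (hs : mulVecMP M (negVec (mulVecMP Mᵀ u)) j ≠ ⊥) (hM : M j k ≠ ⊥) : mulVecMP Mᵀ u k ≠ ⊥ := by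
  set t := mulVecMP Mᵀ u
  obtain ⟨k', hk'⟩ := exists_finset_sup_eq (f := fun k => M j k + negVec t k) hs
  obtain ⟨hMk', htk'⟩ := WithBot.add_ne_bot.mp (by rw [← hk']; exact hs)
  have htk' : (univ.sup fun i => Mᵀ k' i + u i) ≠ ⊥ := fun h =>
    htk' (by rw [negVec, show t k' = ⊥ from h, negBot_bot])
  obtain ⟨i, hi⟩ := exists_finset_sup_eq htk'
  obtain ⟨hMik', hui⟩ := WithBot.add_ne_bot.mp (hi ▸ htk')
  exact ne_bot_of_le_ne_bot (WithBot.add_ne_bot.mpr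
      ⟨apply_ne_bot_of_finite_normalizedPart_imM hfin hM hMik', hui⟩)
    (le_sup (f := fun i => Mᵀ k i + u i) (mem_univ i))

lemma mulVecMP_transpose_negVec_mulVecMP_negVec_le {M : Matrix (Fin m) (Fin n) Zmax}
    (hfin : (normalizedPart (imM M)).Finite) (u : Vec Zmax m) :
    mulVecMP Mᵀ (negVec (mulVecMP M (negVec (mulVecMP Mᵀ u)))) ≤ mulVecMP Mᵀ u := by
  set t := mulVecMP Mᵀ u
  intro k
  refine Finset.sup_le fun j _ => ?_
  rw [transpose_apply]
  rcases eq_or_ne (mulVecMP M (negVec t) j) ⊥ with hs | hs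
  · simp [negVec, hs]
  rcases eq_or_ne (M j k) ⊥ with hM | hM
  · simp [hM]
  obtain ⟨σ, hσ⟩ := WithBot.ne_bot_iff_exists.mp hs
  obtain ⟨μ, hμ⟩ := WithBot.ne_bot_iff_exists.mp hM
  obtain ⟨τ, hτ⟩ : ∃ τ : ℤ, (τ : Zmax) = t k :=
    WithBot.ne_bot_iff_exists.mp (mulVecMP_transpose_apply_ne_bot hfin u hs hM)
  have hle : M j k + negVec t k ≤ mulVecMP M (negVec t) j :=
    le_sup (f := fun k => M j k + negVec t k) (mem_univ k)
  simp only [negVec, ← hσ, ← hμ, ← hτ, negBot_coe, ← WithBot.coe_add, WithBot.coe_le_coe] at hle ⊢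
  omega

lemma mulVecMP_transpose_negVec_mulVecMP_negVec {M : Matrix (Fin m) (Fin n) Zmax}
    (hfin : (normalizedPart (imM M)).Finite) {t : Vec Zmax n} (ht : t ∈ imM Mᵀ) :
    mulVecMP Mᵀ (negVec (mulVecMP M (negVec t))) = t := by
  obtain ⟨u, rfl⟩ := ht
  exact le_antisymm (mulVecMP_transpose_negVec_mulVecMP_negVec_le hfin u)
    (le_mulVecMP_transpose_negVec_mulVecMP_negVec M u)

lemma mulVecMP_negVec_ne_bot {M : Matrix (Fin m) (Fin n) Zmax}
    (hfin : (normalizedPart (imM M)).Finite) {t : Vec Zmax n} (ht : t ∈ normalizedPart (imM Mᵀ)) :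
    mulVecMP M (negVec t) ≠ ⊥ := by
  intro h
  have ht' := mulVecMP_transpose_negVec_mulVecMP_negVec hfin ht.1
  rw [h, negVec_bot, mulVecMP_bot] at ht'
  simpa [← ht', Pi.bot_def] using ht.2

lemma mapsTo_normalizedPart_imM_transpose {M : Matrix (Fin m) (Fin n) Zmax}
    (hfin : (normalizedPart (imM M)).Finite) :
    Set.MapsTo (fun t => normalizeVec (mulVecMP M (negVec t))) (normalizedPart (imM Mᵀ))
      (normalizedPart (imM M)) := fun t ht =>
  normalizeVec_mem_normalizedPart (isSemimodule_imM M) ⟨negVec t, rfl⟩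
    (mulVecMP_negVec_ne_bot hfin ht)

lemma injOn_normalizedPart_imM_transpose {M : Matrix (Fin m) (Fin n) Zmax}
    (hfin : (normalizedPart (imM M)).Finite) :
    Set.InjOn (fun t => normalizeVec (mulVecMP M (negVec t))) (normalizedPart (imM Mᵀ)) := by
  intro t₁ ht₁ t₂ ht₂ h
  obtain ⟨c, hc⟩ := exists_eq_sm_of_normalizeVec_eq (mulVecMP_negVec_ne_bot hfin ht₁)
    (mulVecMP_negVec_ne_bot hfin ht₂) h
  have ht : t₁ = sm ((-c : ℤ) : Zmax) t₂ := by
    rw [← mulVecMP_transpose_negVec_mulVecMP_negVec hfin ht₁.1, hc, negVec_sm, mulVecMP_sm,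
      mulVecMP_transpose_negVec_mulVecMP_negVec hfin ht₂.1]
  rw [← normalizeVec_eq_self ht₁, ← normalizeVec_eq_self ht₂, ht, normalizeVec_sm]

lemma finite_normalizedPart_imM_transpose {M : Matrix (Fin m) (Fin n) Zmax}
    (hfin : (normalizedPart (imM M)).Finite) : (normalizedPart (imM Mᵀ)).Finite :=
  Set.Finite.of_finite_image (hfin.subset (mapsTo_normalizedPart_imM_transpose hfin).image_subset)
    (injOn_normalizedPart_imM_transpose hfin)

lemma ncard_normalizedPart_imM_transpose_le {M : Matrix (Fin m) (Fin n) Zmax}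
    (hfin : (normalizedPart (imM M)).Finite) :
    (normalizedPart (imM Mᵀ)).ncard ≤ (normalizedPart (imM M)).ncard :=
  Set.ncard_le_ncard_of_injOn _ (mapsTo_normalizedPart_imM_transpose hfin)
    (injOn_normalizedPart_imM_transpose hfin) hfin

end FiniteVolume

lemma orthS_contrInvSeq_subset_of_condInv {m n p q : ℕ} {A : Matrix (Fin n) (Fin n) Zmax}
    {C : Matrix (Fin q) (Fin n) Zmax} {E : Matrix (Fin p) (Fin n) Zmax}
    {D : Matrix (Fin m) (Fin n) Zmax} (hD : CondInv C A (kerM D)) (hED : kerM E ⊆ kerM D)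
    (k : ℕ) : orthS (contrInvSeq (orthC (kerM E)) Aᵀ Cᵀ k) ⊆ kerM D := by
  have hsub : imM Dᵀ ⊆ contrInvSeq (orthC (kerM E)) Aᵀ Cᵀ k :=
    hD.contrInv_imM_transpose.subset_contrInvSeq (by rw [← orthC_kerM]; exact orthC_anti hED) k
  simpa only [orthS_imM, transpose_transpose] using orthS_anti hsub

/-- Let `A ∈ ℤ_max^{n×n}`, `C ∈ ℤ_max^{q×n}`, and
`V = ker E` where `E ∈ ℤ_max^{p×n}` has finite volume (the volume of a
semimodule `K` is the cardinality of `{z ∈ K : z₁ ⊕ ⋯ ⊕ z_n = 0}`, and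
`vol(E) = vol(Im E)`).  Then the set of cofinitely generated
`(C,A)`-conditioned invariant congruences containing `V` admits a minimal
element `V_fg(C,A)`; moreover, for the sequence `X_1 := K := V^⊤`,
`X_{k+1} := K ∩ (Aᵗ)⁻¹(X_k ⊕ Im Cᵗ)` (indexed from `0` below), there is an
index `r ≤ vol(E) + 1` (i.e. `r ≤ vol(E)` in the `0`-based indexing) with
`X_{r+1} = X_r` and `V_fg(C,A) = (X_r)^⊥`. -/
theorem finite_volume_minimal_cofinitely_generated
    {n p q : ℕ} (A : Matrix (Fin n) (Fin n) Zmax) (C : Matrix (Fin q) (Fin n) Zmax)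
    (E : Matrix (Fin p) (Fin n) Zmax)
    (hvol : {z ∈ imM E | Finset.univ.sup z = (0 : Zmax)}.Finite)
    (Xseq : ℕ → Set (Vec Zmax n))
    (h0 : Xseq 0 = orthC (kerM E))
    (hstep : ∀ k, Xseq (k + 1) =
      orthC (kerM E) ∩ invSet A.transpose (setSum (Xseq k) (imM C.transpose))) :
    ∃ Vfg : Set (Vec Zmax n × Vec Zmax n),
      (∃ m : ℕ, ∃ D : Matrix (Fin m) (Fin n) Zmax, Vfg = kerM D) ∧
      CondInv C A Vfg ∧ kerM E ⊆ Vfg ∧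
      (∀ W : Set (Vec Zmax n × Vec Zmax n),
        (∃ m : ℕ, ∃ D : Matrix (Fin m) (Fin n) Zmax, W = kerM D) →
        CondInv C A W → kerM E ⊆ W → Vfg ⊆ W) ∧
      ∃ r : ℕ, r ≤ {z ∈ imM E | Finset.univ.sup z = (0 : Zmax)}.ncard ∧
        Xseq (r + 1) = Xseq r ∧ Vfg = orthS (Xseq r) := by
  obtain rfl := eq_contrInvSeq h0 hstep
  set X := contrInvSeq (orthC (kerM E)) A.transpose C.transpose
  have hK : orthC (kerM E) = imM Eᵀ := orthC_kerM E
  have hXsm : ∀ k, IsSemimodule (X k) := (isSemimodule_orthC _).contrInvSeq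
  have hXbot : ∀ k, ⊥ ∈ X k := bot_mem_contrInvSeq (hK ▸ bot_mem_imM _)
  have hXfin : ∀ k, (normalizedPart (X k)).Finite := fun k =>
    (finite_normalizedPart_imM_transpose hvol).subset fun z hz =>
      ⟨hK ▸ contrInvSeq_subset k hz.1, hz.2⟩
  obtain ⟨r, hr, hfix⟩ := exists_succ_eq_of_lt X (fun k => (normalizedPart (X k)).ncard)
    fun k hne => ncard_normalizedPart_lt (hXsm _) (hXsm k) (hXbot _)
      ((contrInvSeq_succ_subset k).ssubset_of_ne hne) (hXfin k)
  obtain ⟨m, G, hG⟩ := exists_eq_imM_of_finite_normalizedPart (hXsm r) (hXbot r) (hXfin r)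
  refine ⟨orthS (X r), ⟨m, Gᵀ, by rw [hG, orthS_imM]⟩,
    (contrInv_contrInvSeq_of_succ_eq hfix).condInv_orthS,
    (subset_orthS_orthC _).trans (orthS_anti (contrInvSeq_subset r)),
    fun W ⟨_, D, hW⟩ hCI hEW => hW ▸ orthS_contrInvSeq_subset_of_condInv (hW ▸ hCI) (hW ▸ hEW) r,
    r, hr.trans ?_, hfix, rfl⟩
  exact (congrArg (fun K => (normalizedPart K).ncard) hK).trans_le
    (ncard_normalizedPart_imM_transpose_le hvol)
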